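/- For every β > 0, ẽ(β) = K₁(β)/K₂(β) + 3/β > 1. -/

import Mathlib

open MeasureTheory Real Set

noncomputable def K0 (β : ℝ) : ℝ :=
  ∫ y in Set.Ioi (0:ℝ), (1 / Real.sqrt (1 + y^2)) * Real.exp (-β * Real.sqrt (1 + y^2))

noncomputable def K1 (β : ℝ) : ℝ :=
  ∫ y in Set.Ioi (0:ℝ), Real.exp (-β * Real.sqrt (1 + y^2))

noncomputable def K2 (β : ℝ) : ℝ :=
  ∫ y in Set.Ioi (0:ℝ), ((2*y^2 + 1) / Real.sqrt (1 + y^2)) * Real.exp (-β * Real.sqrt (1 + y^2))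

noncomputable def Mfun (β : ℝ) : ℝ :=
  ∫ q : EuclideanSpace ℝ (Fin 3), Real.exp (-β * Real.sqrt (1 + ‖q‖^2))

open Filter

/-!
Integrating `y ↦ y e^{-β√(1+y²)}` by parts over `(0, ∞)` gives `K₁ = β ∫ y²/√(1+y²) e^{-β√(1+y²)}`,
and since `(2y² + 1)/√(1+y²) = 2 y²/√(1+y²) + 1/√(1+y²)` this is the recurrence
`K₂ = K₀ + (2/β) K₁`. With `0 ≤ K₀ ≤ K₁` it yields `K₁/K₂ ≥ β/(β+2)`, and
`β/(β+2) + 3/β - 1 = (β+6)/(β(β+2)) > 0`.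
-/

lemma mul_exp_neg_mul_le {β : ℝ} (hβ : 0 < β) (t : ℝ) :
    t * exp (-β * t) ≤ 2 / β * exp (-(β / 2) * t) := by
  have hlin : t ≤ 2 / β * exp (β / 2 * t) := by
    rw [div_mul_eq_mul_div, le_div_iff₀ hβ]
    nlinarith [add_one_le_exp (β / 2 * t), exp_pos (β / 2 * t)]
  calc t * exp (-β * t) = t * exp (-(β / 2) * t) * exp (-(β / 2) * t) := by
        rw [mul_assoc, ← exp_add]; ring_nf
    _ ≤ 2 / β * exp (β / 2 * t) * exp (-(β / 2) * t) * exp (-(β / 2) * t) := by gcongr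
    _ = 2 / β * exp (-(β / 2) * t) := by
        rw [mul_assoc (2 / β), ← exp_add]; ring_nf; rw [exp_zero, mul_one]

section KIntegrals

variable {β : ℝ}

lemma one_le_sqrt_one_add_sq (y : ℝ) : 1 ≤ √(1 + y ^ 2) :=
  one_le_sqrt.2 (by nlinarith [sq_nonneg y])

lemma sqrt_one_add_sq_pos (y : ℝ) : 0 < √(1 + y ^ 2) :=
  one_pos.trans_le (one_le_sqrt_one_add_sq y)

lemma le_sqrt_one_add_sq (y : ℝ) : y ≤ √(1 + y ^ 2) :=
  (le_abs_self y).trans (abs_le_sqrt (by linarith))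

lemma sqrt_one_add_sq_mul_exp_le (hβ : 0 < β) (y : ℝ) :
    √(1 + y ^ 2) * exp (-β * √(1 + y ^ 2)) ≤ 2 / β * exp (-(β / 2) * y) :=
  (mul_exp_neg_mul_le hβ _).trans <| mul_le_mul_of_nonneg_left
    (exp_le_exp.2 (by nlinarith [le_sqrt_one_add_sq y])) (by positivity)

lemma integrableOn_mul_exp_neg_mul_sqrt (hβ : 0 < β) {h : ℝ → ℝ} (hh : Continuous h)
    (hbound : ∀ y, |h y| ≤ √(1 + y ^ 2)) :
    IntegrableOn (fun y => h y * exp (-β * √(1 + y ^ 2))) (Ioi 0) := by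
  refine Integrable.mono' ((exp_neg_integrableOn_Ioi 0 (half_pos hβ)).const_mul (2 / β))
    (by fun_prop : Continuous fun y => h y * exp (-β * √(1 + y ^ 2))).aestronglyMeasurable ?_
  refine ae_of_all _ fun y => ?_
  rw [norm_mul, norm_eq_abs, norm_of_nonneg (exp_pos _).le]
  exact (mul_le_mul_of_nonneg_right (hbound y) (exp_pos _).le).trans
    (sqrt_one_add_sq_mul_exp_le hβ y)

lemma integrableOn_K1 (hβ : 0 < β) :
    IntegrableOn (fun y : ℝ => exp (-β * √(1 + y ^ 2))) (Ioi 0) := by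
  simpa using integrableOn_mul_exp_neg_mul_sqrt hβ (h := fun _ => 1) continuous_const
    fun y => by rw [abs_one]; exact one_le_sqrt_one_add_sq y

lemma integrableOn_K0 (hβ : 0 < β) :
    IntegrableOn (fun y : ℝ => 1 / √(1 + y ^ 2) * exp (-β * √(1 + y ^ 2))) (Ioi 0) := by
  refine integrableOn_mul_exp_neg_mul_sqrt hβ
    (continuous_const.div (by fun_prop) fun y => (sqrt_one_add_sq_pos y).ne') fun y => ?_
  rw [abs_of_pos (by have := sqrt_one_add_sq_pos y; positivity),
    div_le_iff₀ (sqrt_one_add_sq_pos y)]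
  nlinarith [one_le_sqrt_one_add_sq y]

lemma integrableOn_sq_div_sqrt_mul_exp (hβ : 0 < β) :
    IntegrableOn (fun y : ℝ => y ^ 2 / √(1 + y ^ 2) * exp (-β * √(1 + y ^ 2))) (Ioi 0) := by
  refine integrableOn_mul_exp_neg_mul_sqrt hβ
    ((continuous_pow 2).div (by fun_prop) fun y => (sqrt_one_add_sq_pos y).ne') fun y => ?_
  rw [abs_of_nonneg (by have := sqrt_one_add_sq_pos y; positivity),
    div_le_iff₀ (sqrt_one_add_sq_pos y), ← sq, sq_sqrt (by positivity)]
  linarith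

lemma hasDerivAt_mul_exp_neg_mul_sqrt (β y : ℝ) :
    HasDerivAt (fun y => y * exp (-β * √(1 + y ^ 2)))
      (exp (-β * √(1 + y ^ 2)) - β * (y ^ 2 / √(1 + y ^ 2) * exp (-β * √(1 + y ^ 2)))) y := by
  have hsqrt : HasDerivAt (fun y : ℝ => √(1 + y ^ 2)) (1 / (2 * √(1 + y ^ 2)) * (2 * y)) y :=
    (hasDerivAt_sqrt (by positivity)).comp y (by simpa using (hasDerivAt_pow 2 y).const_add 1)
  refine ((hasDerivAt_id' y).mul (hsqrt.const_mul (-β)).exp).congr_deriv ?_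
  field_simp [(sqrt_one_add_sq_pos y).ne']
  ring

lemma tendsto_mul_exp_neg_mul_sqrt (hβ : 0 < β) :
    Tendsto (fun y : ℝ => y * exp (-β * √(1 + y ^ 2))) atTop (nhds 0) := by
  have hdom : Tendsto (fun y : ℝ => 2 / β * exp (-(β / 2) * y)) atTop (nhds 0) := by
    simpa using (tendsto_exp_atBot.comp
      (tendsto_id.const_mul_atTop_of_neg (neg_lt_zero.2 (half_pos hβ)))).const_mul (2 / β)
  refine squeeze_zero' ?_ ?_ hdom <;> filter_upwards [eventually_ge_atTop 0] with y hy
  · positivity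
  · exact (mul_le_mul_of_nonneg_right (le_sqrt_one_add_sq y) (exp_pos _).le).trans
      (sqrt_one_add_sq_mul_exp_le hβ y)

lemma K1_eq_mul_integral_sq_div_sqrt (hβ : 0 < β) :
    K1 β = β * ∫ y in Ioi (0 : ℝ), y ^ 2 / √(1 + y ^ 2) * exp (-β * √(1 + y ^ 2)) := by
  have hparts := integral_Ioi_of_hasDerivAt_of_tendsto'
    (fun y _ => hasDerivAt_mul_exp_neg_mul_sqrt β y)
    ((integrableOn_K1 hβ).sub ((integrableOn_sq_div_sqrt_mul_exp hβ).const_mul β))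
    (tendsto_mul_exp_neg_mul_sqrt hβ)
  rw [integral_sub (integrableOn_K1 hβ) ((integrableOn_sq_div_sqrt_mul_exp hβ).const_mul β),
    integral_const_mul] at hparts
  rw [K1]
  simp only [zero_mul, sub_zero] at hparts
  linarith

lemma K2_eq_K0_add_K1 (hβ : 0 < β) : K2 β = K0 β + 2 / β * K1 β := by
  have hsplit : K2 β = K0 β + 2 * ∫ y in Ioi (0 : ℝ),
      y ^ 2 / √(1 + y ^ 2) * exp (-β * √(1 + y ^ 2)) := by
    rw [K2, K0, ← integral_const_mul,
      ← integral_add (integrableOn_K0 hβ) ((integrableOn_sq_div_sqrt_mul_exp hβ).const_mul 2)]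
    refine setIntegral_congr_fun measurableSet_Ioi fun y _ => ?_
    field_simp [(sqrt_one_add_sq_pos y).ne']
    ring
  rw [hsplit, K1_eq_mul_integral_sq_div_sqrt hβ, ← mul_assoc, div_mul_cancel₀ 2 hβ.ne']

lemma K1_pos (hβ : 0 < β) : 0 < K1 β := by
  have : NeZero (volume.restrict (Ioi (0 : ℝ))) := ⟨by simp [Measure.restrict_eq_zero]⟩
  exact integral_exp_pos (integrableOn_K1 hβ)

lemma K0_nonneg : 0 ≤ K0 β :=
  setIntegral_nonneg measurableSet_Ioi fun y _ => by
    have := sqrt_one_add_sq_pos y; positivity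

lemma K0_le_K1 (hβ : 0 < β) : K0 β ≤ K1 β := by
  refine setIntegral_mono_on (integrableOn_K0 hβ) (integrableOn_K1 hβ) measurableSet_Ioi
    fun y _ => mul_le_of_le_one_left (exp_pos _).le ?_
  rw [div_le_one (sqrt_one_add_sq_pos y)]
  exact one_le_sqrt_one_add_sq y

end KIntegrals

theorem etilde_gt_one (β : ℝ) (hβ : 0 < β) :
    K1 β / K2 β + 3 / β > 1 := by
  have hK1 := K1_pos hβ
  have hK2 : 0 < K2 β := by
    rw [K2_eq_K0_add_K1 hβ]
    exact add_pos_of_nonneg_of_pos K0_nonneg (by positivity)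
  have hratio : β / (β + 2) ≤ K1 β / K2 β := by
    rw [div_le_div_iff₀ (by positivity) hK2, K2_eq_K0_add_K1 hβ]
    have : β * K0 β ≤ β * K1 β := mul_le_mul_of_nonneg_left (K0_le_K1 hβ) hβ.le
    field_simp
    linarith
  have hgap : β / (β + 2) + 3 / β - 1 = (β + 6) / (β * (β + 2)) := by
    field_simp
    ring
  have : 0 < (β + 6) / (β * (β + 2)) := by positivity
  linarith
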